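/- arXiv:2305.01504 — 2 statements merged into one kernel-verified Lean document; each statement's English description precedes it below -/
import Mathlib

section
/- Let α ≥ β ≥ 0 be real numbers with α + β > 1. Then for all a₁, a₂ ∈ ℝ one has ∫_ℝ dx / (⟨x−a₁⟩^α ⟨x−a₂⟩^β) ≲ ⟨a₁−a₂⟩^{−β} φ_α(a₁−a₂), where the implicit constant depends only on α and β, and φ_α(a) = 1 if α > 1, φ_α(a) = log(1+⟨a⟩) if α = 1, and φ_α(a) = ⟨a⟩^{1−α} if α < 1. -/
open MeasureTheory

noncomputable section

/-- Japanese bracket ⟨x⟩ = √(1+x²). -/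
def jb (x : ℝ) : ℝ := Real.sqrt (1 + x ^ 2)

/-- The correction factor `φ_α` of the calculus lemma. -/
def phiA (α : ℝ) (a : ℝ) : ℝ :=
  if 1 < α then 1
  else if α = 1 then Real.log (1 + jb a)
  else jb a ^ (1 - α)

/-!
Translate so that `a₁ = 0`, and put `a = a₁ - a₂`. Since `α ≥ β`, moving the larger exponent onto
the smaller bracket only increases `⟨u⟩^{-α}⟨v⟩^{-β}`, so we may assume `|x| ≤ |x + a|`; then
`⟨x + a⟩ ≥ ⟨a⟩/2` and `⟨x + a⟩ ≥ ⟨x⟩`. Hence the integrand is at most `M(|x|) + M(|x + a|)`, where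
`M(r) = (⟨a⟩/2)^{-β}⟨r⟩^{-α}` for `r ≤ ⟨a⟩` and `M(r) = r^{-(α+β)}` beyond. The near part integrates
to `⟨a⟩^{-β}∫₀^{⟨a⟩}⟨r⟩^{-α} ≲ ⟨a⟩^{-β}∫₁^{1+⟨a⟩}t^{-α} ≲ ⟨a⟩^{-β}φ_α(a)`, the tail to
`⟨a⟩^{1-α-β}/(α+β-1) = ⟨a⟩^{-β}⟨a⟩^{1-α}/(α+β-1) ≲ ⟨a⟩^{-β}φ_α(a)`.
-/

open Set Real

lemma jb_pos (x : ℝ) : 0 < jb x := Real.sqrt_pos.2 (by positivity)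

lemma one_le_jb (x : ℝ) : 1 ≤ jb x := Real.one_le_sqrt.2 (by nlinarith)

lemma continuous_jb : Continuous jb := by unfold jb; fun_prop

lemma jb_abs (x : ℝ) : jb |x| = jb x := by simp [jb]

lemma abs_le_jb (x : ℝ) : |x| ≤ jb x :=
  Real.abs_le_sqrt (by nlinarith)

lemma jb_le_jb_of_abs_le {x y : ℝ} (h : |x| ≤ |y|) : jb x ≤ jb y :=
  Real.sqrt_le_sqrt (by nlinarith [sq_abs x, sq_abs y, abs_nonneg x])

lemma one_add_abs_le_two_mul_jb (x : ℝ) : 1 + |x| ≤ 2 * jb x := by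
  have h := Real.sq_sqrt (show (0 : ℝ) ≤ 1 + x ^ 2 by positivity)
  nlinarith [sq_abs x, sq_nonneg (|x| - 1), jb_pos x, jb.eq_1 x]

lemma jb_two_mul_le (x : ℝ) : jb (2 * x) ≤ 2 * jb x := by
  have h := Real.sq_sqrt (show (0 : ℝ) ≤ 1 + x ^ 2 by positivity)
  exact Real.sqrt_le_iff.2 ⟨by positivity [jb_pos x], by rw [jb, mul_pow, mul_pow, h]; nlinarith⟩

lemma rpow_neg_mul_rpow_neg_le_swap {u v α β : ℝ} (hu : 0 < u) (huv : u ≤ v) (hαβ : β ≤ α) :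
    v ^ (-α) * u ^ (-β) ≤ u ^ (-α) * v ^ (-β) := by
  have hv : 0 < v := hu.trans_le huv
  have key : v ^ (-(α - β)) ≤ u ^ (-(α - β)) :=
    rpow_le_rpow_of_nonpos hu huv (by linarith)
  calc v ^ (-α) * u ^ (-β) = (v ^ (-(α - β)) * v ^ (-β)) * u ^ (-β) := by
        rw [← rpow_add hv]; ring_nf
    _ ≤ (u ^ (-(α - β)) * u ^ (-β)) * v ^ (-β) := by
        rw [mul_right_comm]; gcongr
    _ = u ^ (-α) * v ^ (-β) := by rw [← rpow_add hu]; ring_nf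

lemma integrable_comp_abs {g : ℝ → ℝ} (hg : IntegrableOn g (Ioi 0)) :
    Integrable fun x => g |x| := by
  have h_pos : IntegrableOn (fun x => g |x|) (Ioi 0) :=
    hg.congr_fun (fun x hx => by rw [abs_of_pos hx]) measurableSet_Ioi
  have h_neg : IntegrableOn (fun x => g |x|) (Iic 0) := by
    have neg_emb : MeasurableEmbedding fun x : ℝ => -x := (Homeomorph.neg ℝ).measurableEmbedding
    rw [← Measure.map_neg_eq_self (volume : Measure ℝ), neg_emb.integrableOn_map_iff]
    simp_rw [Function.comp_def, abs_neg, neg_preimage, neg_Iic, neg_zero]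
    exact (integrableOn_Ici_iff_integrableOn_Ioi).2 h_pos
  have := h_neg.union h_pos
  rwa [Iic_union_Ioi, integrableOn_univ] at this

/-- Cutting at `r = ⟨a⟩` rather than at `|a|` keeps the tail `r^{-(α+β)}` away from `r = 0`. -/
def majorant (α β a r : ℝ) : ℝ :=
  if r ≤ jb a then (jb a / 2) ^ (-β) * jb r ^ (-α) else r ^ (-(α + β))

variable {α β a : ℝ}

lemma majorant_nonneg {r : ℝ} (hr : 0 ≤ r) : 0 ≤ majorant α β a r := by
  unfold majorant
  split_ifs
  · exact mul_nonneg (rpow_nonneg (half_pos (jb_pos a)).le _) (rpow_nonneg (jb_pos r).le _)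
  · exact rpow_nonneg hr _

lemma jb_rpow_mul_le_majorant {u v : ℝ} (hα : 0 ≤ α) (hβ : 0 ≤ β) (hu : 0 ≤ u) (huv : u ≤ v)
    (ha : |a| ≤ u + v) : jb u ^ (-α) * jb v ^ (-β) ≤ majorant α β a u := by
  have hv : 0 ≤ v := hu.trans huv
  have ha_v : jb a / 2 ≤ jb v := by
    have : jb a ≤ jb (2 * v) :=
      jb_le_jb_of_abs_le (by rw [abs_of_nonneg (by linarith : 0 ≤ 2 * v)]; linarith)
    linarith [jb_two_mul_le v]
  unfold majorant
  split_ifs with h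
  · rw [mul_comm ((jb a / 2) ^ (-β))]
    exact mul_le_mul_of_nonneg_left
      (rpow_le_rpow_of_nonpos (half_pos (jb_pos a)) ha_v (neg_nonpos.2 hβ))
      (rpow_nonneg (jb_pos u).le _)
  · have hu_pos : 0 < u := by linarith [one_le_jb a]
    have huv' : jb u ≤ jb v := jb_le_jb_of_abs_le (by rwa [abs_of_nonneg hu, abs_of_nonneg hv])
    calc jb u ^ (-α) * jb v ^ (-β) ≤ jb u ^ (-α) * jb u ^ (-β) :=
          mul_le_mul_of_nonneg_left (rpow_le_rpow_of_nonpos (jb_pos u) huv' (neg_nonpos.2 hβ))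
            (rpow_nonneg (jb_pos u).le _)
      _ = jb u ^ (-(α + β)) := by rw [← rpow_add (jb_pos u), neg_add]
      _ ≤ u ^ (-(α + β)) := by
          refine rpow_le_rpow_of_nonpos hu_pos ?_ (by linarith : -(α + β) ≤ 0)
          simpa [abs_of_nonneg hu] using abs_le_jb u

lemma jb_rpow_mul_le_majorant_add {u v : ℝ} (hβ : 0 ≤ β) (hαβ : β ≤ α) (hu : 0 ≤ u)
    (hv : 0 ≤ v) (ha : |a| ≤ u + v) :
    jb u ^ (-α) * jb v ^ (-β) ≤ majorant α β a u + majorant α β a v := by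
  have hα : 0 ≤ α := hβ.trans hαβ
  rcases le_total u v with huv | hvu
  · linarith [jb_rpow_mul_le_majorant hα hβ hu huv ha,
      majorant_nonneg (α := α) (β := β) (a := a) hv]
  · have hjb : jb v ≤ jb u := jb_le_jb_of_abs_le (by rwa [abs_of_nonneg hu, abs_of_nonneg hv])
    linarith [rpow_neg_mul_rpow_neg_le_swap (jb_pos v) hjb hαβ,
      jb_rpow_mul_le_majorant hα hβ hv hvu (by linarith),
      majorant_nonneg (α := α) (β := β) (a := a) hu]

lemma integrableOn_majorant (hs : 1 < α + β) : IntegrableOn (majorant α β a) (Ioi 0) := by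
  have hR : 0 < jb a := jb_pos a
  rw [← Ioc_union_Ioi_eq_Ioi hR.le]
  refine IntegrableOn.union ?_ ?_
  · have hcont : Continuous fun r => (jb a / 2) ^ (-β) * jb r ^ (-α) :=
      (continuous_jb.rpow_const fun r => Or.inl (jb_pos r).ne').const_mul _
    refine (hcont.integrableOn_Icc.mono_set Ioc_subset_Icc_self).congr_fun
      (fun r hr => ?_) measurableSet_Ioc
    simp [majorant, hr.2]
  · refine (integrableOn_Ioi_rpow_of_lt (by linarith : -(α + β) < -1) hR).congr_fun
      (fun r hr => ?_) measurableSet_Ioi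
    simp [majorant, not_le.2 (mem_Ioi.1 hr)]

lemma integral_majorant_comp_abs (hs : 1 < α + β) :
    ∫ x, majorant α β a |x| =
      2 * ((jb a / 2) ^ (-β) * (∫ r in (0)..jb a, jb r ^ (-α)) +
        jb a ^ (1 - (α + β)) / (α + β - 1)) := by
  have hR : 0 < jb a := jb_pos a
  have hint := integrableOn_majorant (α := α) (β := β) (a := a) hs
  rw [integral_comp_abs, ← Ioc_union_Ioi_eq_Ioi hR.le,
    setIntegral_union (Ioc_disjoint_Ioi le_rfl) measurableSet_Ioi
      (hint.mono_set Ioc_subset_Ioi_self) (hint.mono_set (Ioi_subset_Ioi hR.le))]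
  congr 2
  · rw [intervalIntegral.integral_of_le hR.le, ← integral_const_mul]
    exact setIntegral_congr_fun measurableSet_Ioc fun r hr => by simp [majorant, hr.2]
  · rw [setIntegral_congr_fun (g := fun r => r ^ (-(α + β))) measurableSet_Ioi fun r hr => by
      simp [majorant, not_le.2 (mem_Ioi.1 hr)],
      integral_Ioi_rpow_of_lt (by linarith : -(α + β) < -1) hR]
    rw [show -(α + β) + 1 = 1 - (α + β) by ring, neg_div, ← div_neg, neg_sub]

lemma jb_rpow_neg_le (hα : 0 ≤ α) (r : ℝ) : jb r ^ (-α) ≤ 2 ^ α * (1 + |r|) ^ (-α) := by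
  calc jb r ^ (-α) ≤ ((1 + |r|) / 2) ^ (-α) :=
        rpow_le_rpow_of_nonpos (by positivity) (by linarith [one_add_abs_le_two_mul_jb r])
          (neg_nonpos.2 hα)
    _ = 2 ^ α * (1 + |r|) ^ (-α) := by
        rw [div_rpow (by positivity) zero_le_two, rpow_neg zero_le_two, div_inv_eq_mul, mul_comm]

lemma intervalIntegral_jb_rpow_neg_le (hα : 0 ≤ α) {R : ℝ} (hR : 0 ≤ R) :
    ∫ r in (0)..R, jb r ^ (-α) ≤ 2 ^ α * ∫ t in (1)..1 + R, t ^ (-α) := by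
  have h_shift : ∫ t in (1)..1 + R, t ^ (-α) = ∫ r in (0)..R, (1 + r) ^ (-α) := by
    have h := intervalIntegral.integral_comp_add_left (fun t => t ^ (-α)) (1 : ℝ) (a := 0) (b := R)
    rw [add_zero] at h
    exact h.symm
  rw [h_shift, ← intervalIntegral.integral_const_mul]
  refine intervalIntegral.integral_mono_on hR
    ((continuous_jb.rpow_const fun r => Or.inl (jb_pos r).ne').intervalIntegrable _ _)
    (ContinuousOn.intervalIntegrable fun r hr => ?_) fun r hr => ?_
  · rw [uIcc_of_le hR] at hr
    exact (continuousAt_const.mul ((continuousAt_const.add continuousAt_id).rpow_const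
      (Or.inl (show (1 : ℝ) + r ≠ 0 by linarith [hr.1])))).continuousWithinAt
  · simpa [abs_of_nonneg hr.1] using jb_rpow_neg_le hα r

lemma intervalIntegral_rpow_neg_le_phiA (hα : 0 ≤ α) :
    ∃ C, 0 < C ∧ ∀ a : ℝ, ∫ t in (1)..1 + jb a, t ^ (-α) ≤ C * phiA α a := by
  rcases lt_trichotomy α 1 with hlt | rfl | hgt
  · refine ⟨2 ^ (1 - α) / (1 - α), div_pos (by positivity) (by linarith), fun a => ?_⟩
    rw [phiA, if_neg (by linarith), if_neg hlt.ne, integral_rpow (Or.inl (by linarith)),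
      one_rpow, show -α + 1 = 1 - α by ring]
    calc ((1 + jb a) ^ (1 - α) - 1) / (1 - α) ≤ (1 + jb a) ^ (1 - α) / (1 - α) := by
          gcongr
          linarith
      _ ≤ (2 * jb a) ^ (1 - α) / (1 - α) := by
          gcongr <;> linarith [one_le_jb a]
      _ = 2 ^ (1 - α) / (1 - α) * jb a ^ (1 - α) := by
          rw [mul_rpow zero_le_two (jb_pos a).le]; ring
  · refine ⟨1, one_pos, fun a => ?_⟩
    simp_rw [rpow_neg_one]
    rw [integral_inv_of_pos one_pos (by linarith [jb_pos a]), div_one, phiA,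
      if_neg (lt_irrefl 1), if_pos rfl, one_mul]
  · refine ⟨1 / (α - 1), div_pos one_pos (by linarith), fun a => ?_⟩
    have h_zero : (0 : ℝ) ∉ uIcc 1 (1 + jb a) := notMem_uIcc_of_lt one_pos (by linarith [jb_pos a])
    rw [phiA, if_pos hgt, mul_one, integral_rpow (Or.inr ⟨by linarith, h_zero⟩), one_rpow,
      show -α + 1 = -(α - 1) by ring, div_neg, ← neg_div, neg_sub]
    gcongr
    linarith [rpow_nonneg (show (0 : ℝ) ≤ 1 + jb a by linarith [jb_pos a]) (-(α - 1))]

lemma rpow_le_phiA (α : ℝ) : ∃ C, 0 < C ∧ ∀ a : ℝ, jb a ^ (1 - α) ≤ C * phiA α a := by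
  rcases lt_trichotomy α 1 with hlt | rfl | hgt
  · exact ⟨1, one_pos, fun a => by rw [phiA, if_neg (by linarith), if_neg hlt.ne, one_mul]⟩
  · have hlog2 : 0 < Real.log 2 := Real.log_pos one_lt_two
    refine ⟨1 / Real.log 2, by positivity, fun a => ?_⟩
    rw [phiA, if_neg (lt_irrefl 1), if_pos rfl, sub_self, rpow_zero, one_div_mul_eq_div,
      le_div_iff₀ hlog2, one_mul]
    exact Real.log_le_log two_pos (by linarith [one_le_jb a])
  · refine ⟨1, one_pos, fun a => ?_⟩
    rw [phiA, if_pos hgt, mul_one]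
    exact rpow_le_one_of_one_le_of_nonpos (one_le_jb a) (by linarith)

lemma integral_jb_rpow_mul_jb_add_rpow_le (hβ : 0 ≤ β) (hαβ : β ≤ α) (hs : 1 < α + β) :
    ∫ x, jb x ^ (-α) * jb (x + a) ^ (-β) ≤
      4 * jb a ^ (-β) * (2 ^ (α + β) * (∫ t in (1)..1 + jb a, t ^ (-α)) +
        jb a ^ (1 - α) / (α + β - 1)) := by
  have hM : Integrable fun x => majorant α β a |x| :=
    integrable_comp_abs (integrableOn_majorant hs)
  have hM_shift : Integrable fun x => majorant α β a |x + a| := hM.comp_add_right a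
  have h_pointwise (x : ℝ) :
      jb x ^ (-α) * jb (x + a) ^ (-β) ≤ majorant α β a |x| + majorant α β a |x + a| := by
    rw [← jb_abs x, ← jb_abs (x + a)]
    refine jb_rpow_mul_le_majorant_add hβ hαβ (abs_nonneg _) (abs_nonneg _) ?_
    simpa [add_comm] using abs_sub (x + a) x
  have h_near := intervalIntegral_jb_rpow_neg_le (hβ.trans hαβ) (jb_pos a).le
  calc ∫ x, jb x ^ (-α) * jb (x + a) ^ (-β)
      ≤ ∫ x, (majorant α β a |x| + majorant α β a |x + a|) :=
        integral_mono_of_nonneg (.of_forall fun x => mul_nonneg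
          (rpow_nonneg (jb_pos _).le _) (rpow_nonneg (jb_pos _).le _)) (hM.add hM_shift)
          (.of_forall h_pointwise)
    _ = 2 * ∫ x, majorant α β a |x| := by
        rw [integral_add hM hM_shift, integral_add_right_eq_self (fun x => majorant α β a |x|) a,
          two_mul]
    _ = 4 * (2 ^ β * jb a ^ (-β) * ∫ r in (0)..jb a, jb r ^ (-α)) +
          4 * jb a ^ (-β) * jb a ^ (1 - α) / (α + β - 1) := by
        rw [integral_majorant_comp_abs hs, div_rpow (jb_pos a).le zero_le_two,
          rpow_neg zero_le_two, div_inv_eq_mul, show 1 - (α + β) = -β + (1 - α) by ring,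
          rpow_add (jb_pos a)]
        ring
    _ ≤ 4 * (2 ^ β * jb a ^ (-β) * (2 ^ α * ∫ t in (1)..1 + jb a, t ^ (-α))) +
          4 * jb a ^ (-β) * jb a ^ (1 - α) / (α + β - 1) := by
        gcongr
        exact mul_nonneg (by positivity) (rpow_nonneg (jb_pos a).le _)
    _ = _ := by rw [rpow_add zero_lt_two]; ring

/-- **Calculus lemma** (Lemma 3.8, [ET, Lemma 3.3]): for `α ≥ β ≥ 0` with `α + β > 1`,
`∫ dx / (⟨x−a₁⟩^α ⟨x−a₂⟩^β) ≲ ⟨a₁−a₂⟩^{−β} φ_α(a₁−a₂)`. -/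
theorem calculus_lemma (α β : ℝ) (hβ : 0 ≤ β) (hαβ : β ≤ α) (hsum : 1 < α + β) :
    ∃ C : ℝ, 0 < C ∧ ∀ a₁ a₂ : ℝ,
      (∫ x : ℝ, jb (x - a₁) ^ (-α) * jb (x - a₂) ^ (-β)) ≤
        C * (jb (a₁ - a₂) ^ (-β) * phiA α (a₁ - a₂)) := by
  obtain ⟨C₁, hC₁, h_near⟩ := intervalIntegral_rpow_neg_le_phiA (hβ.trans hαβ)
  obtain ⟨C₂, hC₂, h_far⟩ := rpow_le_phiA α
  have hs : 0 < α + β - 1 := by linarith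
  refine ⟨4 * (2 ^ (α + β) * C₁ + C₂ / (α + β - 1)), by positivity, fun a₁ a₂ => ?_⟩
  have h_shift : ∫ x, jb (x - a₁) ^ (-α) * jb (x - a₂) ^ (-β) =
      ∫ x, jb x ^ (-α) * jb (x + (a₁ - a₂)) ^ (-β) := by
    rw [← integral_sub_right_eq_self (fun x => jb x ^ (-α) * jb (x + (a₁ - a₂)) ^ (-β)) a₁]
    simp only [sub_add_sub_cancel]
  have h_weight : 0 ≤ jb (a₁ - a₂) ^ (-β) := rpow_nonneg (jb_pos _).le _
  calc ∫ x, jb (x - a₁) ^ (-α) * jb (x - a₂) ^ (-β)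
      ≤ 4 * jb (a₁ - a₂) ^ (-β) * (2 ^ (α + β) * (∫ t in (1)..1 + jb (a₁ - a₂), t ^ (-α)) +
          jb (a₁ - a₂) ^ (1 - α) / (α + β - 1)) :=
        h_shift ▸ integral_jb_rpow_mul_jb_add_rpow_le hβ hαβ hsum
    _ ≤ 4 * jb (a₁ - a₂) ^ (-β) * (2 ^ (α + β) * (C₁ * phiA α (a₁ - a₂)) +
          C₂ * phiA α (a₁ - a₂) / (α + β - 1)) := by
        gcongr
        exacts [h_near _, h_far _]
    _ = _ := by ring
end
end

section
/- Let γ, δ ∈ ℝ and p(ξ) = γξ³ + δξ⁵. For all real numbers ξ, ξ₁, ξ₂, τ, τ₁, τ₂ with ξ = ξ₁ + ξ₂ and τ = τ₁ + τ₂, one has max( |τ − p(ξ)|, |τ₁ − p(ξ₁)|, |τ₂ − p(ξ₂)| ) ≥ (1/3) |5δ ξ ξ₁ ξ₂ (ξ² − ξξ₁ + ξ₁²) + 3γ ξ ξ₁ ξ₂|. In particular, this follows from the algebraic resonance identity p(ξ₁+ξ₂) − p(ξ₁) − p(ξ₂) = 5δ ξ ξ₁ ξ₂ (ξ² − ξξ₁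 + ξ₁²) + 3γ ξ ξ₁ ξ₂ with ξ = ξ₁ + ξ₂. -/
noncomputable section

/-- Kawahara dispersion polynomial `p(ξ) = γξ³ + δξ⁵`. -/
def pdisp (γ δ : ℝ) (ξ : ℝ) : ℝ := γ * ξ ^ 3 + δ * ξ ^ 5

theorem pdisp_add_sub_pdisp_sub_pdisp (γ δ ξ₁ ξ₂ : ℝ) :
    pdisp γ δ (ξ₁ + ξ₂) - pdisp γ δ ξ₁ - pdisp γ δ ξ₂ =
      5 * δ * (ξ₁ + ξ₂) * ξ₁ * ξ₂ * ((ξ₁ + ξ₂) ^ 2 - (ξ₁ + ξ₂) * ξ₁ + ξ₁ ^ 2) +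
        3 * γ * (ξ₁ + ξ₂) * ξ₁ * ξ₂ := by
  simp only [pdisp]
  ring

theorem abs_resonance_le_three_mul_max_modulation {β : Type*} [Add β] (p : β → ℝ)
    (ξ₁ ξ₂ : β) (τ₁ τ₂ : ℝ) :
    |p (ξ₁ + ξ₂) - p ξ₁ - p ξ₂| ≤
      3 * max |τ₁ + τ₂ - p (ξ₁ + ξ₂)| (max |τ₁ - p ξ₁| |τ₂ - p ξ₂|) := by
  set M := max |τ₁ + τ₂ - p (ξ₁ + ξ₂)| (max |τ₁ - p ξ₁| |τ₂ - p ξ₂|)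
  have hres : p (ξ₁ + ξ₂) - p ξ₁ - p ξ₂ =
      (τ₁ - p ξ₁) + (τ₂ - p ξ₂) - (τ₁ + τ₂ - p (ξ₁ + ξ₂)) := by ring
  calc |p (ξ₁ + ξ₂) - p ξ₁ - p ξ₂|
      ≤ |τ₁ - p ξ₁| + |τ₂ - p ξ₂| + |τ₁ + τ₂ - p (ξ₁ + ξ₂)| := by
        rw [hres]
        exact (abs_sub _ _).trans (add_le_add_left (abs_add_le _ _) _)
    _ ≤ M + M + M := by
        gcongr
        · exact (le_max_left _ _).trans (le_max_right _ _)
        · exact (le_max_right _ _).trans (le_max_right _ _)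
        · exact le_max_left _ _
    _ = 3 * M := by ring

/-- **Resonance identity and modulation lower bound for the Kawahara dispersion**:
if `ξ = ξ₁ + ξ₂` and `τ = τ₁ + τ₂`, then
`p(ξ₁+ξ₂) − p(ξ₁) − p(ξ₂) = 5δξξ₁ξ₂(ξ²−ξξ₁+ξ₁²) + 3γξξ₁ξ₂` and
`max(|τ−p(ξ)|, |τ₁−p(ξ₁)|, |τ₂−p(ξ₂)|) ≥ (1/3)|5δξξ₁ξ₂(ξ²−ξξ₁+ξ₁²) + 3γξξ₁ξ₂|`. -/
theorem kawahara_resonance (γ δ ξ ξ₁ ξ₂ τ τ₁ τ₂ : ℝ)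
    (hξ : ξ = ξ₁ + ξ₂) (hτ : τ = τ₁ + τ₂) :
    pdisp γ δ (ξ₁ + ξ₂) - pdisp γ δ ξ₁ - pdisp γ δ ξ₂ =
        5 * δ * ξ * ξ₁ * ξ₂ * (ξ ^ 2 - ξ * ξ₁ + ξ₁ ^ 2) + 3 * γ * ξ * ξ₁ * ξ₂ ∧
      (1 / 3 : ℝ) * |5 * δ * ξ * ξ₁ * ξ₂ * (ξ ^ 2 - ξ * ξ₁ + ξ₁ ^ 2) + 3 * γ * ξ * ξ₁ * ξ₂| ≤
        max |τ - pdisp γ δ ξ| (max |τ₁ - pdisp γ δ ξ₁| |τ₂ - pdisp γ δ ξ₂|) := by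
  subst hξ hτ
  rw [← pdisp_add_sub_pdisp_sub_pdisp]
  refine ⟨rfl, ?_⟩
  linarith [abs_resonance_le_three_mul_max_modulation (pdisp γ δ) ξ₁ ξ₂ τ₁ τ₂]
end
end
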